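/- Let T be a tree with leaf set L and let e, e' be distinct edges of T. Then the splits P_e and P_{e'} induced by removing e and e' respectively are compatible: exactly one of the four intersections P_e∩P_{e'}, P_e∩P_{e'}ᶜ, P_eᶜ∩P_{e'}, P_eᶜ∩P_{e'}ᶜ is empty. -/

import Mathlib

/-!
Orient the two edges `e = ab` and `e' = a'b'` so that `e'` lies on the `b`-side of `e` and `e` on
the `b'`-side of `e'`. Then the `a`-side of `e` and the `a'`-side of `e'` are disjoint, since a
path joining them would have to cross `e` or `e'`. Each side of an edge of a finite forest
contains a leaf: move away from the edge until no further step is possible. The region between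
the two edges contains a leaf as well: either `b` is a leaf, or, having no degree two, it has two
neighbours besides `a`; the branches at `b` through them are disjoint and both avoid `b`, while the
`a'`-side of `e'` is connected and avoids `b`, so one of these branches misses it, and any leaf
of that branch works. The four orientations give the four cases.
-/

namespace SimpleGraph

variable {V : Type*} {G : SimpleGraph V}

def edgeSide (G : SimpleGraph V) (a b : V) : Set V :=
  {x | (G.deleteEdges {s(a, b)}).Reachable a x}

lemma self_mem_edgeSide (a b : V) : a ∈ G.edgeSide a b := Reachable.refl a

lemma reachable_deleteEdges_of_not_reachable {e₁ e₂ : Sym2 V} {x y c : V}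
    (hxy : (G.deleteEdges {e₁}).Reachable x y) (hxc : ¬(G.deleteEdges {e₁}).Reachable x c)
    (hc : c ∈ e₂) : (G.deleteEdges {e₂}).Reachable x y := by
  classical
  obtain ⟨p⟩ := hxy
  have he₂ : e₂ ∉ p.edges := fun he ↦ hxc ⟨p.takeUntil c (p.mem_support_of_mem_edges he hc)⟩
  exact (p.toDeleteEdge e₂ he₂).reachable.mono (deleteEdges_mono (deleteEdges_le _))

lemma mem_edgeSide_iff_of_adj {a b x y : V} (hxy : G.Adj x y) (hne : s(x, y) ≠ s(a, b)) :
    x ∈ G.edgeSide a b ↔ y ∈ G.edgeSide a b := by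
  have hadj : (G.deleteEdges {s(a, b)}).Adj x y := deleteEdges_adj.mpr ⟨hxy, hne⟩
  exact ⟨fun h ↦ h.trans hadj.reachable, fun h ↦ h.trans hadj.symm.reachable⟩

lemma Preconnected.mem_edgeSide_or_mem_edgeSide (hG : G.Preconnected) (a b x : V) :
    x ∈ G.edgeSide a b ∨ x ∈ G.edgeSide b a := by
  obtain ⟨p⟩ := hG x a
  induction p with
  | nil => exact Or.inl (self_mem_edgeSide _ _)
  | @cons x y a hxy _ ih =>
    by_cases he : s(x, y) = s(a, b)
    · rcases Sym2.eq_iff.mp he with ⟨rfl, -⟩ | ⟨rfl, -⟩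
      · exact Or.inl (self_mem_edgeSide _ _)
      · exact Or.inr (self_mem_edgeSide _ _)
    · have he' : s(x, y) ≠ s(b, a) := by rwa [Sym2.eq_swap (a := b)]
      rwa [mem_edgeSide_iff_of_adj hxy he, mem_edgeSide_iff_of_adj hxy he']

lemma disjoint_edgeSide_of_notMem {a b a' b' : V} (h : a' ∉ G.edgeSide a b)
    (h' : a ∉ G.edgeSide a' b') : Disjoint (G.edgeSide a b) (G.edgeSide a' b') := by
  refine Set.disjoint_left.mpr fun x hx hx' ↦ h' ?_
  have hxa' : ¬(G.deleteEdges {s(a, b)}).Reachable x a' := fun hxa' ↦ h (hx.trans hxa')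
  exact hx'.trans (reachable_deleteEdges_of_not_reachable hx.symm hxa' (Sym2.mem_mk_left a' b'))

lemma exists_adj_adj_ne_of_two_lt_degree {b : V} [Fintype (G.neighborSet b)]
    (hb : 2 < G.degree b) (a : V) :
    ∃ w₁ w₂, G.Adj b w₁ ∧ G.Adj b w₂ ∧ w₁ ≠ a ∧ w₂ ≠ a ∧ w₁ ≠ w₂ := by
  classical
  have hcard : 1 < ((G.neighborFinset b).erase a).card := by
    have := Finset.pred_card_le_card_erase (s := G.neighborFinset b) (a := a)
    rw [card_neighborFinset_eq_degree] at this
    omega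
  obtain ⟨w₁, h₁, w₂, h₂, hw⟩ := Finset.one_lt_card.mp hcard
  simp only [Finset.mem_erase, mem_neighborFinset] at h₁ h₂
  exact ⟨w₁, w₂, h₁.2, h₂.2, h₁.1, h₂.1, hw⟩

namespace IsAcyclic

lemma notMem_edgeSide (hG : G.IsAcyclic) {a b : V} (hab : G.Adj a b) : b ∉ G.edgeSide a b :=
  isAcyclic_iff_forall_adj_isBridge.mp hG hab

lemma disjoint_edgeSide_swap (hG : G.IsAcyclic) {a b : V} (hab : G.Adj a b) :
    Disjoint (G.edgeSide a b) (G.edgeSide b a) := by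
  refine Set.disjoint_left.mpr fun x hxa hxb ↦ hG.notMem_edgeSide hab (hxa.trans ?_)
  rw [Sym2.eq_swap]
  exact hxb.symm

lemma edgeSide_subset_edgeSide (hG : G.IsAcyclic) {b c w : V} (hbw : G.Adj b w)
    (hwc : w ≠ c) :
    G.edgeSide w b ⊆ G.edgeSide b c := fun _ hx ↦
  have hw : w ∈ G.edgeSide b c :=
    (mem_edgeSide_iff_of_adj hbw (mt Sym2.congr_right.mp hwc)).mp (self_mem_edgeSide b c)
  hw.trans <| reachable_deleteEdges_of_not_reachable hx (hG.notMem_edgeSide hbw.symm)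
    (Sym2.mem_mk_left b c)

lemma exists_degree_eq_one_mem_edgeSide [Fintype V] [DecidableRel G.Adj] (hG : G.IsAcyclic)
    {a b : V} (hab : G.Adj a b) :
    ∃ x, G.degree x = 1 ∧ x ∈ G.edgeSide a b := by
  induction hn : (G.edgeSide a b).ncard using Nat.strong_induction_on generalizing a b with
  | _ n ih =>
  by_cases ha : G.degree a = 1
  · exact ⟨a, ha, self_mem_edgeSide a b⟩
  obtain ⟨c, hac, hcb⟩ : ∃ c, G.Adj a c ∧ c ≠ b := by
    by_contra! h
    exact ha (degree_eq_one_iff_existsUnique_adj.mpr ⟨b, hab, h⟩)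
  have hlt : G.edgeSide c a ⊂ G.edgeSide a b :=
    ⟨hG.edgeSide_subset_edgeSide hac hcb,
      fun h ↦ hG.notMem_edgeSide hac.symm (h (self_mem_edgeSide a b))⟩
  obtain ⟨x, hx, hxc⟩ := ih _ (hn ▸ Set.ncard_lt_ncard hlt) hac.symm rfl
  exact ⟨x, hx, hlt.subset hxc⟩

lemma exists_degree_eq_one_notMem_edgeSide [Fintype V] [DecidableRel G.Adj] (hG : G.IsAcyclic)
    (hdeg : ∀ v, G.degree v ≠ 2) {a b a' b' : V}
    (hab : G.Adj a b) (hb : b ∉ G.edgeSide a' b') :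
    ∃ x, G.degree x = 1 ∧ x ∉ G.edgeSide a b ∧ x ∉ G.edgeSide a' b' := by
  by_cases hb₁ : G.degree b = 1
  · exact ⟨b, hb₁, hG.notMem_edgeSide hab, hb⟩
  have hb₃ : 2 < G.degree b := by
    have := (G.degree_pos_iff_exists_adj b).mpr ⟨a, hab.symm⟩
    have := hdeg b
    omega
  obtain ⟨w₁, w₂, h₁, h₂, h₁a, h₂a, hw⟩ := exists_adj_adj_ne_of_two_lt_degree hb₃ a
  obtain ⟨w, hbw, hwa, hw'⟩ :
      ∃ w, G.Adj b w ∧ w ≠ a ∧ Disjoint (G.edgeSide w b) (G.edgeSide a' b') := by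
    by_contra! h
    obtain ⟨x₁, hx₁, hx₁'⟩ := Set.not_disjoint_iff.mp (h w₁ h₁ h₁a)
    obtain ⟨x₂, hx₂, hx₂'⟩ := Set.not_disjoint_iff.mp (h w₂ h₂ h₂a)
    have hx₂₁ : x₂ ∈ G.edgeSide w₁ b :=
      hx₁.trans <| reachable_deleteEdges_of_not_reachable (hx₁'.symm.trans hx₂')
        (fun hx₁b ↦ hb (hx₁'.trans hx₁b)) (Sym2.mem_mk_right w₁ b)
    exact (hG.disjoint_edgeSide_swap h₁.symm).notMem_of_mem_left hx₂₁
      (hG.edgeSide_subset_edgeSide h₂ hw.symm hx₂)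
  obtain ⟨x, hx, hxw⟩ := hG.exists_degree_eq_one_mem_edgeSide hbw.symm
  exact ⟨x, hx, (hG.disjoint_edgeSide_swap hab).notMem_of_mem_right
    (hG.edgeSide_subset_edgeSide hbw hwa hxw), hw'.notMem_of_mem_left hxw⟩

end IsAcyclic

lemma IsTree.edgeSide_swap (hG : G.IsTree) {a b : V} (hab : G.Adj a b) :
    G.edgeSide b a = (G.edgeSide a b)ᶜ := by
  ext x
  exact ⟨fun hx hx' ↦ (hG.isAcyclic.disjoint_edgeSide_swap hab).notMem_of_mem_left hx' hx,
    (hG.connected.preconnected.mem_edgeSide_or_mem_edgeSide a b x).resolve_left⟩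

lemma IsTree.notMem_edgeSide_swap (hG : G.IsTree) {a b x : V} (hab : G.Adj a b) :
    x ∉ G.edgeSide b a ↔ x ∈ G.edgeSide a b := by
  rw [hG.edgeSide_swap hab, Set.notMem_compl_iff]

/-- The part `P_e` of the split of the leaves at the edge `e = ab`, on the side of `a`. -/
def splitPart [Fintype V] (G : SimpleGraph V) [DecidableRel G.Adj] (a b : V) : Set V :=
  {x | G.degree x = 1 ∧ x ∈ G.edgeSide a b}

section Split

variable [Fintype V] [DecidableRel G.Adj]

lemma IsTree.diff_splitPart (hG : G.IsTree) {a b : V} (hab : G.Adj a b) :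
    {x | G.degree x = 1} \ G.splitPart a b = G.splitPart b a := by
  ext x
  simp only [splitPart, hG.edgeSide_swap hab, Set.mem_sdiff, Set.mem_ofPred_eq, Set.mem_compl_iff]
  tauto

lemma IsTree.splitPart_inter_eq_empty_and_nonempty (hG : G.IsTree) (hdeg : ∀ v, G.degree v ≠ 2)
    {a b a' b' : V} (hab : G.Adj a b) (hab' : G.Adj a' b') (hne : s(a, b) ≠ s(a', b'))
    (h : a' ∉ G.edgeSide a b) (h' : a ∉ G.edgeSide a' b') :
    G.splitPart a b ∩ G.splitPart a' b' = ∅ ∧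
      (G.splitPart a b ∩ G.splitPart b' a').Nonempty ∧
      (G.splitPart b a ∩ G.splitPart a' b').Nonempty ∧
      (G.splitPart b a ∩ G.splitPart b' a').Nonempty := by
  have hdisj := disjoint_edgeSide_of_notMem h h'
  have hb : b ∉ G.edgeSide a' b' := (mem_edgeSide_iff_of_adj hab hne).not.mp h'
  obtain ⟨x, hx, hxa⟩ := hG.isAcyclic.exists_degree_eq_one_mem_edgeSide hab
  obtain ⟨y, hy, hya'⟩ := hG.isAcyclic.exists_degree_eq_one_mem_edgeSide hab'
  obtain ⟨z, hz, hza, hza'⟩ := hG.isAcyclic.exists_degree_eq_one_notMem_edgeSide hdeg hab hb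
  simp only [splitPart, hG.edgeSide_swap hab, hG.edgeSide_swap hab']
  exact ⟨Set.eq_empty_iff_forall_notMem.mpr fun w hw ↦ hdisj.notMem_of_mem_left hw.1.2 hw.2.2,
    ⟨x, ⟨hx, hxa⟩, hx, hdisj.notMem_of_mem_left hxa⟩,
    ⟨y, ⟨hy, hdisj.notMem_of_mem_right hya'⟩, hy, hya'⟩, ⟨z, ⟨hz, hza⟩, hz, hza'⟩⟩

end Split

end SimpleGraph

/-- in a finite tree with no degree-2 vertices, the splits of the leaf
set induced by removing two distinct edges are compatible: exactly one of the four
pairwise intersections of the parts is empty. -/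
theorem stmt9 {V : Type*} [Fintype V] (G : SimpleGraph V) [DecidableRel G.Adj]
    (hT : G.IsTree)
    (hdeg : ∀ v : V, G.degree v ≠ 2)
    (u v u' v' : V) (huv : G.Adj u v) (huv' : G.Adj u' v')
    (hne : s(u, v) ≠ s(u', v')) :
    let leaves : Set V := {x | G.degree x = 1}
    let P : Set V := {x ∈ leaves | (G.deleteEdges {s(u, v)}).Reachable u x}
    let Q : Set V := {x ∈ leaves | (G.deleteEdges {s(u', v')}).Reachable u' x}
    (P ∩ Q = ∅ ∧ (P ∩ (leaves \ Q)).Nonempty ∧ ((leaves \ P) ∩ Q).Nonempty ∧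
        ((leaves \ P) ∩ (leaves \ Q)).Nonempty) ∨
    (P ∩ (leaves \ Q) = ∅ ∧ (P ∩ Q).Nonempty ∧ ((leaves \ P) ∩ Q).Nonempty ∧
        ((leaves \ P) ∩ (leaves \ Q)).Nonempty) ∨
    ((leaves \ P) ∩ Q = ∅ ∧ (P ∩ Q).Nonempty ∧ (P ∩ (leaves \ Q)).Nonempty ∧
        ((leaves \ P) ∩ (leaves \ Q)).Nonempty) ∨
    ((leaves \ P) ∩ (leaves \ Q) = ∅ ∧ (P ∩ Q).Nonempty ∧ (P ∩ (leaves \ Q)).Nonempty ∧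
        ((leaves \ P) ∩ Q).Nonempty) := by
  intro leaves P Q
  have hP : leaves \ P = G.splitPart v u := hT.diff_splitPart huv
  have hQ : leaves \ Q = G.splitPart v' u' := hT.diff_splitPart huv'
  rw [hP, hQ]
  have hvu : s(v, u) ≠ s(u', v') := by rwa [Sym2.eq_swap]
  have hv'u' : s(u, v) ≠ s(v', u') := by rwa [Sym2.eq_swap (a := v')]
  have hvv' : s(v, u) ≠ s(v', u') := by rwa [Sym2.eq_swap (a := v')]
  have hsame' := SimpleGraph.mem_edgeSide_iff_of_adj huv' hne.symm
  have hsame := SimpleGraph.mem_edgeSide_iff_of_adj huv hne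
  by_cases hu' : u' ∈ G.edgeSide u v <;> by_cases hu : u ∈ G.edgeSide u' v'
  · obtain ⟨h₁, h₂, h₃, h₄⟩ :=
      hT.splitPart_inter_eq_empty_and_nonempty hdeg huv.symm huv'.symm hvv'
        ((hT.notMem_edgeSide_swap huv).mpr (hsame'.mp hu'))
        ((hT.notMem_edgeSide_swap huv').mpr (hsame.mp hu))
    exact Or.inr <| Or.inr <| Or.inr ⟨h₁, h₄, h₃, h₂⟩
  · obtain ⟨h₁, h₂, h₃, h₄⟩ :=
      hT.splitPart_inter_eq_empty_and_nonempty hdeg huv.symm huv' hvu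
        ((hT.notMem_edgeSide_swap huv).mpr hu') (hsame.not.mp hu)
    exact Or.inr <| Or.inr <| Or.inl ⟨h₁, h₃, h₄, h₂⟩
  · obtain ⟨h₁, h₂, h₃, h₄⟩ :=
      hT.splitPart_inter_eq_empty_and_nonempty hdeg huv huv'.symm hv'u'
        (hsame'.not.mp hu') ((hT.notMem_edgeSide_swap huv').mpr hu)
    exact Or.inr <| Or.inl ⟨h₁, h₂, h₄, h₃⟩
  · exact Or.inl (hT.splitPart_inter_eq_empty_and_nonempty hdeg huv huv' hne hu' hu)
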